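/- Let N ≥ 1, 2 < q ≤ p̄ < p < 2*, a > 0, μ < 0. If u ∈ S_a satisfies P_μ(u) = |∇u|₂² − γ_p|u|_p^p − μγ_q|u|_q^q = 0, then |∇u|₂² ≤ γ_p|u|_p^p ≤ γ_p C_{N,p}^p a^{(1−γ_p)p} |∇u|₂^{γ_p p}, hence |∇u|₂ ≥ (γ_p C_{N,p}^p a^{(1−γ_p)p})^{−1/(γ_p p − 2)}, and E_μ(u) = ½(1 − 2/(γ_p p))|∇u|₂² − (μ/q)(1 − γ_q q/(γ_p p))|u|_q^q ≥ ½(1 − 2/(γ_p p))|∇u|₂². In particular m(a,μ) = inf_{P_{a,μ}} E_μ > 0. -/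

import Mathlib

/-!
On the Pohozaev manifold the focusing `L^p` term controls the kinetic energy: since `μ < 0`,
`|∇u|₂² ≤ γ_p |u|_p^p`, and Gagliardo–Nirenberg bounds the right side by a multiple of
`|∇u|₂^{γ_p p}`. As `γ_p p > 2` (mass supercritical) this forces `|∇u|₂` away from zero.
Eliminating `|u|_p^p` from the energy with the Pohozaev identity leaves
`½(1 − 2/(γ_p p))|∇u|₂²` plus a multiple of `|u|_q^q` that is nonnegative because
`μ < 0` and `γ_q q ≤ 2 < γ_p p`.
-/

open Real

/-- The exponent `γ_r` of the Gagliardo–Nirenberg inequality in dimension `N`. -/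
noncomputable def gnExponent (N r : ℝ) : ℝ := N * (r - 2) / (2 * r)

section GNExponent

variable {N r : ℝ}

lemma gnExponent_mul_self (hr : r ≠ 0) : gnExponent N r * r = N * (r - 2) / 2 := by
  unfold gnExponent
  field_simp

lemma gnExponent_pos (hN : 0 < N) (hr : 2 < r) : 0 < gnExponent N r :=
  div_pos (mul_pos hN (by linarith)) (by linarith)

lemma two_lt_gnExponent_mul_self (hN : 0 < N) (hr : 2 + 4 / N < r) :
    2 < gnExponent N r * r := by
  have hr0 : r ≠ 0 := by linarith [show 0 < 4 / N by positivity]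
  have h := mul_lt_mul_of_pos_left (show 4 / N < r - 2 by linarith) hN
  rw [mul_div_cancel₀ _ hN.ne'] at h
  rw [gnExponent_mul_self hr0]
  linarith

lemma gnExponent_mul_self_le_two (hN : 0 < N) (hr0 : r ≠ 0) (hr : r ≤ 2 + 4 / N) :
    gnExponent N r * r ≤ 2 := by
  have h := mul_le_mul_of_nonneg_left (show r - 2 ≤ 4 / N by linarith) hN.le
  rw [mul_div_cancel₀ _ hN.ne'] at h
  rw [gnExponent_mul_self hr0]
  linarith

end GNExponent

section Pohozaev

variable {G Pp Qq E μ p q γp γq : ℝ}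

lemma sq_lt_of_pohozaev (hPoh : G ^ 2 - γp * Pp - μ * γq * Qq = 0)
    (hμ : μ < 0) (hγq : 0 < γq) (hQq : 0 < Qq) : G ^ 2 < γp * Pp := by
  have : μ * γq * Qq < 0 := mul_neg_of_neg_of_pos (mul_neg_of_neg_of_pos hμ hγq) hQq
  linarith

lemma energy_eq_of_pohozaev (hγp : γp ≠ 0) (hp : p ≠ 0) (hq : q ≠ 0)
    (hE : E = G ^ 2 / 2 - Pp / p - μ * Qq / q)
    (hPoh : G ^ 2 - γp * Pp - μ * γq * Qq = 0) :
    E = 1 / 2 * (1 - 2 / (γp * p)) * G ^ 2 - μ / q * (1 - γq * q / (γp * p)) * Qq := by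
  have hPp : Pp = (G ^ 2 - μ * γq * Qq) / γp := by
    field_simp
    linarith
  rw [hE, hPp]
  field_simp
  ring

lemma half_mul_sq_le_energy_of_pohozaev (hγp : 0 < γp) (hp : 0 < p) (hq : 0 < q)
    (hμ : μ ≤ 0) (hQq : 0 ≤ Qq) (hγ : γq * q ≤ γp * p)
    (hE : E = G ^ 2 / 2 - Pp / p - μ * Qq / q)
    (hPoh : G ^ 2 - γp * Pp - μ * γq * Qq = 0) :
    1 / 2 * (1 - 2 / (γp * p)) * G ^ 2 ≤ E := by
  rw [energy_eq_of_pohozaev hγp.ne' hp.ne' hq.ne' hE hPoh, le_sub_self_iff]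
  have hratio : 0 ≤ 1 - γq * q / (γp * p) := by
    rw [sub_nonneg, div_le_one (by positivity)]
    exact hγ
  exact mul_nonpos_of_nonpos_of_nonneg
    (mul_nonpos_of_nonpos_of_nonneg (div_nonpos_of_nonpos_of_nonneg hμ hq.le) hratio) hQq

end Pohozaev

section PowerBounds

variable {G K s : ℝ}

lemma pos_of_sq_lt_mul_rpow (hG : 0 ≤ G) (hs : 0 < s) (h : G ^ 2 < K * G ^ s) : 0 < G := by
  refine hG.lt_of_ne fun hG0 => ?_
  subst hG0
  simp [zero_rpow hs.ne'] at h

lemma rpow_neg_inv_le_of_sq_le_mul_rpow (hK : 0 < K) (hs : 2 < s) (hG : 0 < G)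
    (h : G ^ 2 ≤ K * G ^ s) : K ^ (-(1 / (s - 2))) ≤ G := by
  have hs2 : 0 < s - 2 := by linarith
  have hKinv : K⁻¹ ≤ G ^ (s - 2) := by
    rw [rpow_sub hG, rpow_two, le_div_iff₀ (by positivity), inv_mul_le_iff₀ hK]
    exact h
  rw [rpow_neg hK.le, ← inv_rpow hK.le, one_div, rpow_inv_le_iff_of_pos (by positivity) hG.le hs2]
  exact hKinv

end PowerBounds

theorem stmt14_general (N : ℕ) (hN : 1 ≤ N) (a μ q p pbar γp γq Cp : ℝ)
    (hpbar : pbar = 2 + 4 / (N : ℝ)) (hγp : γp = (N : ℝ) * (p - 2) / (2 * p))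
    (hγq : γq = (N : ℝ) * (q - 2) / (2 * q))
    (hq : 2 < q) (hqp : q ≤ pbar) (hp : pbar < p)
    (ha : 0 < a) (hμ : μ < 0) (hCp : 0 < Cp)
    (G Pp Qq E : ℝ)
    (hG : 0 ≤ G) (hQq : 0 < Qq)
    (hGNp : Pp ≤ Cp ^ p * G ^ (γp * p) * a ^ ((1 - γp) * p))
    (hE : E = G ^ 2 / 2 - Pp / p - μ * Qq / q)
    (hPoh : G ^ 2 - γp * Pp - μ * γq * Qq = 0) :
    G ^ 2 ≤ γp * Pp ∧
    γp * Pp ≤ γp * Cp ^ p * a ^ ((1 - γp) * p) * G ^ (γp * p) ∧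
    (γp * Cp ^ p * a ^ ((1 - γp) * p)) ^ (-(1 / (γp * p - 2))) ≤ G ∧
    (1 / 2) * (1 - 2 / (γp * p)) * G ^ 2 ≤ E ∧
    0 < E := by
  have hN0 : (0 : ℝ) < N := by exact_mod_cast hN
  rw [hpbar] at hqp hp
  have hp2 : 2 < p := by linarith [show 0 < 4 / (N : ℝ) by positivity]
  have hγp0 : 0 < γp := hγp ▸ gnExponent_pos hN0 hp2
  have hγq0 : 0 < γq := hγq ▸ gnExponent_pos hN0 hq
  have hsp : 2 < γp * p := hγp ▸ two_lt_gnExponent_mul_self hN0 hp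
  have hsq : γq * q ≤ 2 := hγq ▸ gnExponent_mul_self_le_two hN0 (by positivity) hqp
  set K := γp * Cp ^ p * a ^ ((1 - γp) * p)
  have hGN : γp * Pp ≤ K * G ^ (γp * p) := by
    calc γp * Pp ≤ γp * (Cp ^ p * G ^ (γp * p) * a ^ ((1 - γp) * p)) :=
          mul_le_mul_of_nonneg_left hGNp hγp0.le
      _ = K * G ^ (γp * p) := by ring
  have hkin : G ^ 2 < γp * Pp := sq_lt_of_pohozaev hPoh hμ hγq0 hQq
  have hGpos : 0 < G := pos_of_sq_lt_mul_rpow hG (by linarith) (hkin.trans_le hGN)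
  have hEG := half_mul_sq_le_energy_of_pohozaev hγp0 (by linarith) (by linarith) hμ.le hQq.le
    (by linarith) hE hPoh
  have hcoef : 0 < 1 - 2 / (γp * p) := by
    rw [sub_pos, div_lt_one (by linarith)]
    exact hsp
  refine ⟨hkin.le, hGN, rpow_neg_inv_le_of_sq_le_mul_rpow (by positivity) hsp hGpos
    (hkin.le.trans hGN), hEG, hEG.trans_lt' (by positivity)⟩

/-- Lower bounds on the Pohozaev manifold for `2 < q ≤ p̄ < p < 2*`, `a > 0`, `μ < 0`.
For `u ∈ S_a` write `G = |∇u|₂ ≥ 0`, `Pp = |u|_p^p ≥ 0`, `Qq = |u|_q^q > 0`, with the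
Gagliardo–Nirenberg bound `Pp ≤ C_{N,p}^p G^{γ_p p} a^{(1−γ_p)p}`.  If the Pohozaev
constraint `G² − γ_p Pp − μγ_q Qq = 0` holds, then `G² ≤ γ_p Pp ≤
γ_p C_{N,p}^p a^{(1−γ_p)p} G^{γ_p p}`, hence
`G ≥ (γ_p C_{N,p}^p a^{(1−γ_p)p})^{−1/(γ_p p − 2)}`, and
`E_μ(u) ≥ ½(1 − 2/(γ_p p))G²`, so `E_μ(u) > 0`; in particular
`m(a,μ) = inf_{P_{a,μ}} E_μ > 0`. -/
theorem stmt14 (N : ℕ) (hN : 1 ≤ N) (a μ q p pbar γp γq Cp : ℝ)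
    (hpbar : pbar = 2 + 4 / (N : ℝ)) (hγp : γp = (N : ℝ) * (p - 2) / (2 * p))
    (hγq : γq = (N : ℝ) * (q - 2) / (2 * q))
    (hq : 2 < q) (hqp : q ≤ pbar) (hp : pbar < p)
    (hp2s : N ≤ 2 ∨ p < 2 * (N : ℝ) / ((N : ℝ) - 2))
    (ha : 0 < a) (hμ : μ < 0) (hCp : 0 < Cp)
    (G Pp Qq E : ℝ)
    (hG : 0 ≤ G) (hPp : 0 ≤ Pp) (hQq : 0 < Qq)
    (hGNp : Pp ≤ Cp ^ p * G ^ (γp * p) * a ^ ((1 - γp) * p))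
    (hE : E = G ^ 2 / 2 - Pp / p - μ * Qq / q)
    (hPoh : G ^ 2 - γp * Pp - μ * γq * Qq = 0) :
    G ^ 2 ≤ γp * Pp ∧
    γp * Pp ≤ γp * Cp ^ p * a ^ ((1 - γp) * p) * G ^ (γp * p) ∧
    (γp * Cp ^ p * a ^ ((1 - γp) * p)) ^ (-(1 / (γp * p - 2))) ≤ G ∧
    (1 / 2) * (1 - 2 / (γp * p)) * G ^ 2 ≤ E ∧
    0 < E :=
  stmt14_general N hN a μ q p pbar γp γq Cp hpbar hγp hγq hq hqp hp ha hμ hCp G Pp Qq E hG hQq hGNp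
    hE hPoh
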